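/- If e has continuous density f bounded below by c > 0 in a neighborhood [−η, η] of 0 with F(0) = τ, then for any b ∈ ℝ, E[ρ_τ(e − b)] − E[ρ_τ(e)] ≥ (c/2)·min(|b|, η)², where F is the CDF of e. -/

import Mathlib

/-!
Knight's identity `ρ_τ(u - b) - ρ_τ(u) = -τ b + ∫₀ᵇ 𝟙{u ≤ s} ds` and Fubini give
`E ρ_τ(e - b) - E ρ_τ(e) = ∫₀ᵇ (F s - F 0) ds`. Since `F` is monotone the integrand has the sign
of `s`, and the density bound gives `|F s - F 0| ≥ c |s|` for `|s| ≤ η`; integrating only over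
the part of `[0, b]` within distance `η` of `0` yields `(c / 2) min(|b|, η)²`.
-/

open MeasureTheory

noncomputable def rho (τ u : ℝ) : ℝ := u * (τ - if u < 0 then 1 else 0)

open Set

lemma rho_eq_mul_add_max (τ u : ℝ) : rho τ u = τ * u + max (-u) 0 := by
  unfold rho
  split_ifs with h
  · rw [max_eq_left (by linarith)]; ring
  · rw [max_eq_right (by linarith)]; ring

lemma integrable_rho_sub_const {Ω : Type*} [MeasurableSpace Ω] {μ : Measure Ω}
    [IsFiniteMeasure μ] {e : Ω → ℝ} (he : Integrable e μ) (τ b : ℝ) :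
    Integrable (fun ω => rho τ (e ω - b)) μ := by
  simp only [rho_eq_mul_add_max]
  exact ((he.sub (integrable_const b)).const_mul τ).add (he.sub (integrable_const b)).neg_part

lemma monotone_ite_le (u : ℝ) : Monotone fun s : ℝ => if u ≤ s then (1 : ℝ) else 0 := by
  intro s t hst
  dsimp only
  split_ifs with hs ht <;> first | exact absurd (hs.trans hst) ht | norm_num

lemma intervalIntegral_ite_le (u a b : ℝ) :
    ∫ s in a..b, (if u ≤ s then (1 : ℝ) else 0) = max (b - u) 0 - max (a - u) 0 := by
  refine intervalIntegral.integral_eq_sub_of_hasDeriv_right (f := fun s => max (s - u) 0)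
    ((continuous_id.sub continuous_const).max continuous_const).continuousOn
    (fun x _ => ?_) (monotone_ite_le u).intervalIntegrable
  by_cases hx : u ≤ x
  · rw [if_pos hx]
    refine (hasDerivAt_id' x |>.sub_const u).hasDerivWithinAt.congr (fun y hy => ?_) ?_
    · exact max_eq_left (by linarith [mem_Ioi.1 hy])
    · exact max_eq_left (by linarith)
  · rw [if_neg hx]
    refine ((hasDerivAt_const x (0 : ℝ)).congr_of_eventuallyEq ?_).hasDerivWithinAt
    filter_upwards [Iio_mem_nhds (not_le.1 hx)] with y hy
    exact max_eq_right (by linarith [mem_Iio.1 hy])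

lemma rho_sub_rho_eq_intervalIntegral (τ u b : ℝ) :
    rho τ (u - b) - rho τ u = -(τ * b) + ∫ s in 0..b, (if u ≤ s then (1 : ℝ) else 0) := by
  rw [rho_eq_mul_add_max, rho_eq_mul_add_max, intervalIntegral_ite_le, neg_sub, zero_sub]
  ring

lemma integral_intervalIntegral_ite_le {Ω : Type*} [MeasurableSpace Ω] (μ : Measure Ω)
    [IsFiniteMeasure μ] {e : Ω → ℝ} (he : Measurable e) (a b : ℝ) :
    ∫ ω, (∫ s in a..b, (if e ω ≤ s then (1 : ℝ) else 0)) ∂μ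
      = ∫ s in a..b, μ.real {ω | e ω ≤ s} := by
  have : IsFiniteMeasure (volume.restrict (uIoc a b)) := by
    rw [uIoc]; infer_instance
  have hmeas : Measurable fun p : ℝ × Ω => if e p.2 ≤ p.1 then (1 : ℝ) else 0 :=
    Measurable.ite (measurableSet_le (he.comp measurable_snd) measurable_fst)
      measurable_const measurable_const
  have hint : Integrable (fun p : ℝ × Ω => if e p.2 ≤ p.1 then (1 : ℝ) else 0)
      ((volume.restrict (uIoc a b)).prod μ) := by
    refine (integrable_const (1 : ℝ)).mono' hmeas.aestronglyMeasurable ?_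
    filter_upwards with p
    split_ifs <;> simp
  rw [← intervalIntegral_integral_swap hint]
  congr 1
  ext s
  rw [← integral_indicator_one (s := {ω | e ω ≤ s}) (he measurableSet_Iic)]
  rfl

lemma integral_rho_sub_sub_integral_rho {Ω : Type*} [MeasurableSpace Ω] (μ : Measure Ω)
    [IsProbabilityMeasure μ] {e : Ω → ℝ} (he : Measurable e) (heint : Integrable e μ)
    (τ b : ℝ) :
    (∫ ω, rho τ (e ω - b) ∂μ) - ∫ ω, rho τ (e ω) ∂μ
      = ∫ s in 0..b, (μ.real {ω | e ω ≤ s} - τ) := by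
  have hinner : Integrable (fun ω => ∫ s in 0..b, (if e ω ≤ s then (1 : ℝ) else 0)) μ := by
    simp only [intervalIntegral_ite_le, zero_sub]
    exact ((integrable_const b).sub heint).pos_part.sub heint.neg_part
  have h0 := integrable_rho_sub_const heint τ 0
  simp only [sub_zero] at h0
  rw [← integral_sub (integrable_rho_sub_const heint τ b) h0]
  simp only [rho_sub_rho_eq_intervalIntegral]
  rw [integral_add (integrable_const _) hinner, integral_const,
    integral_intervalIntegral_ite_le μ he, intervalIntegral.integral_sub _ intervalIntegrable_const]
  · simp only [probReal_univ, smul_eq_mul, mul_neg, one_mul, intervalIntegral.integral_const,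
      sub_zero]
    ring
  · have hmono : Monotone fun s : ℝ => μ.real {ω | e ω ≤ s} :=
      fun s t hst => measureReal_mono fun ω hω => le_trans hω hst
    exact hmono.intervalIntegrable

lemma half_mul_sq_min_le_intervalIntegral_sub {F : ℝ → ℝ} (hF : Monotone F) {c η b : ℝ}
    (hη : 0 ≤ η) (hb : 0 ≤ b) (hrate : ∀ s ∈ Icc 0 η, c * s ≤ F s - F 0) :
    c / 2 * min b η ^ 2 ≤ ∫ s in 0..b, (F s - F 0) := by
  set m := min b η
  have hm : 0 ≤ m := le_min hb hη
  have hint : ∀ x y : ℝ, IntervalIntegrable (fun s => F s - F 0) volume x y :=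
    fun x y => (hF.intervalIntegrable).sub intervalIntegrable_const
  have htail : 0 ≤ ∫ s in m..b, (F s - F 0) :=
    intervalIntegral.integral_nonneg (min_le_left b η) fun s hs => sub_nonneg.2 (hF (hm.trans hs.1))
  have hhead : ∫ s in 0..m, c * s ≤ ∫ s in 0..m, (F s - F 0) :=
    intervalIntegral.integral_mono_on hm
      ((continuous_const.mul continuous_id).intervalIntegrable 0 m) (hint 0 m)
      fun s hs => hrate s ⟨hs.1, hs.2.trans (min_le_right b η)⟩
  have hval : ∫ s in 0..m, c * s = c / 2 * m ^ 2 := by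
    rw [intervalIntegral.integral_const_mul, integral_id]; ring
  rw [← intervalIntegral.integral_add_adjacent_intervals (hint 0 m) (hint m b)]
  linarith

lemma half_mul_sq_min_abs_le_intervalIntegral_sub {F : ℝ → ℝ} (hF : Monotone F) {c η : ℝ}
    (hη : 0 ≤ η)
    (hrate : ∀ s ∈ Icc (-η) η, ∀ t ∈ Icc (-η) η, s ≤ t → c * (t - s) ≤ F t - F s) (b : ℝ) :
    c / 2 * min |b| η ^ 2 ≤ ∫ s in 0..b, (F s - F 0) := by
  have h0 : (0 : ℝ) ∈ Icc (-η) η := ⟨by linarith, hη⟩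
  rcases le_total 0 b with hb | hb
  · rw [abs_of_nonneg hb]
    refine half_mul_sq_min_le_intervalIntegral_sub hF hη hb fun s hs => ?_
    simpa using hrate 0 h0 s ⟨by linarith [hs.1], hs.2⟩ hs.1
  · have hF' : Monotone fun s => -F (-s) := fun s t hst => neg_le_neg (hF (neg_le_neg hst))
    have hreflected := half_mul_sq_min_le_intervalIntegral_sub (c := c) hF' hη (neg_nonneg.2 hb)
      fun s hs => by
        have := hrate (-s) ⟨by linarith [hs.2], by linarith [hs.1]⟩ 0 h0 (by linarith [hs.1])
        simp only [neg_zero]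
        linarith
    rw [abs_of_nonpos hb]
    convert hreflected using 1
    have hcomp_neg := intervalIntegral.integral_comp_neg (a := 0) (b := -b) fun x => F 0 - F x
    rw [neg_neg, neg_zero] at hcomp_neg
    simp only [neg_zero, sub_neg_eq_add, neg_add_eq_sub, hcomp_neg,
      intervalIntegral.integral_symm b 0, ← intervalIntegral.integral_neg, neg_sub]

lemma mul_sub_le_sub_of_hasDensity {F f : ℝ → ℝ} (hF : ∀ t, F t = ∫ s in Iic t, f s)
    {c s t : ℝ} (hst : s ≤ t) (hf : IntegrableOn f (Iic t)) (hc : ∀ x ∈ Icc s t, c ≤ f x) :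
    c * (t - s) ≤ F t - F s := by
  rw [hF, hF, intervalIntegral.integral_Iic_sub_Iic (hf.mono_set (Iic_subset_Iic.2 hst)) hf]
  calc c * (t - s) = ∫ _ in s..t, c := by
        rw [intervalIntegral.integral_const, smul_eq_mul, mul_comm]
    _ ≤ ∫ x in s..t, f x := intervalIntegral.integral_mono_on hst intervalIntegrable_const
        ((intervalIntegrable_iff_integrableOn_Icc_of_le hst).2 (hf.mono_set Icc_subset_Iic_self)) hc

theorem check_loss_quadratic_lower_bound_general
    {Ω : Type*} [MeasurableSpace Ω] (μ : Measure Ω) [IsProbabilityMeasure μ]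
    (e : Ω → ℝ) (he : Measurable e) (heint : Integrable e μ)
    (τ : ℝ) (hτ : τ ∈ Set.Ioo (0:ℝ) 1)
    (F : ℝ → ℝ) (hFdef : ∀ t, F t = (μ {ω | e ω ≤ t}).toReal)
    (f : ℝ → ℝ) (hdensity : ∀ t, F t = ∫ s in Set.Iic t, f s)
    (hF0 : F 0 = τ)
    (c η : ℝ) (hη : 0 < η)
    (hlower : ∀ s ∈ Set.Icc (-η) η, c ≤ f s)
    (b : ℝ) :
    c / 2 * (min |b| η)^2
      ≤ (∫ ω, rho τ (e ω - b) ∂μ) - ∫ ω, rho τ (e ω) ∂μ := by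
  have hFmono : Monotone F := fun s t hst => by
    simp only [hFdef]
    exact measureReal_mono fun ω hω => le_trans hω hst
  have hfint : IntegrableOn f (Iic η) := by
    by_contra h
    have := hFmono hη.le
    rw [hF0, hdensity η, integral_undef h] at this
    linarith [hτ.1]
  have hrate : ∀ s ∈ Icc (-η) η, ∀ t ∈ Icc (-η) η, s ≤ t → c * (t - s) ≤ F t - F s :=
    fun s hs t ht hst => mul_sub_le_sub_of_hasDensity hdensity hst
      (hfint.mono_set (Iic_subset_Iic.2 ht.2))
      fun x hx => hlower x ⟨hs.1.trans hx.1, hx.2.trans ht.2⟩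
  rw [integral_rho_sub_sub_integral_rho μ he heint, ← hF0]
  simp only [Measure.real, ← hFdef]
  exact half_mul_sq_min_abs_le_intervalIntegral_sub hFmono hη.le hrate b

theorem check_loss_quadratic_lower_bound
    {Ω : Type*} [MeasurableSpace Ω] (μ : Measure Ω) [IsProbabilityMeasure μ]
    (e : Ω → ℝ) (he : Measurable e) (heint : Integrable e μ)
    (τ : ℝ) (hτ : τ ∈ Set.Ioo (0:ℝ) 1)
    (F : ℝ → ℝ) (hFdef : ∀ t, F t = (μ {ω | e ω ≤ t}).toReal)
    (f : ℝ → ℝ) (hdensity : ∀ t, F t = ∫ s in Set.Iic t, f s)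
    (hF0 : F 0 = τ)
    (c η : ℝ) (hc : 0 < c) (hη : 0 < η)
    (hlower : ∀ s ∈ Set.Icc (-η) η, c ≤ f s)
    (b : ℝ) :
    c / 2 * (min |b| η)^2
      ≤ (∫ ω, rho τ (e ω - b) ∂μ) - ∫ ω, rho τ (e ω) ∂μ :=
  check_loss_quadratic_lower_bound_general μ e he heint τ hτ F hFdef f hdensity hF0 c η hη hlower b
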